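/- Let Σ be a finite nonempty alphabet, let z ∈ {h, p, r, c, rc}, and let π : Σ → Σ be a mapping, extended letterwise (entrywise) to arrays and array languages. Then the class 𝓛_{Σ,z} is closed under π (i.e., π(L) ∈ 𝓛_{Σ,z} for every L ∈ 𝓛_{Σ,z}) if and only if π is a bijection. -/
import Mathlib


/-- A nonempty rectangular two-dimensional word (array) over `σ`. -/
structure Arr (σ : Type) : Type where
  rows : ℕ
  cols : ℕ
  rows_pos : 0 < rows
  cols_pos : 0 < cols
  entry : Fin rows → Fin cols → σ

namespace Arr

variable {σ γ : Type}

/-- Column concatenation: place `V` to the right of `U`; `none` if heights differ. -/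
def colCat (U V : Arr σ) : Option (Arr σ) :=
  if h : U.rows = V.rows then
    some { rows := U.rows
           cols := U.cols + V.cols
           rows_pos := U.rows_pos
           cols_pos := by have := U.cols_pos; omega
           entry := fun i j =>
             if hj : (j : ℕ) < U.cols then U.entry i ⟨j, hj⟩
             else V.entry (Fin.cast h i) ⟨(j : ℕ) - U.cols, by have := j.isLt; omega⟩ }
  else none

/-- Row concatenation: place `V` below `U`; `none` if widths differ. -/
def rowCat (U V : Arr σ) : Option (Arr σ) :=
  if h : U.cols = V.cols then
    some { rows := U.rows + V.rows
           cols := U.cols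
           rows_pos := by have := U.rows_pos; omega
           cols_pos := U.cols_pos
           entry := fun i j =>
             if hi : (i : ℕ) < U.rows then U.entry ⟨i, hi⟩ j
             else V.entry ⟨(i : ℕ) - U.rows, by have := i.isLt; omega⟩ (Fin.cast h j) }
  else none

/-- A two-dimensional morphism: compatible with both concatenations,
with "both sides undefined" counting as equal. -/
def IsMorphism (h : Arr σ → Arr γ) : Prop :=
  (∀ V W : Arr σ, Option.map h (colCat V W) = colCat (h V) (h W)) ∧
  (∀ V W : Arr σ, Option.map h (rowCat V W) = rowCat (h V) (h W))

/-- Concatenate a nonempty list of (possibly undefined) arrays with the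
given partial concatenation operation; `none` on the empty list. -/
def catListO (op : Arr σ → Arr σ → Option (Arr σ)) : List (Option (Arr σ)) → Option (Arr σ)
  | [] => none
  | [a] => a
  | a :: b :: rest => a.bind fun x => (catListO op (b :: rest)).bind fun y => op x y

/-- `g_{⦶,⊖}`: substitute and assemble, first column-concatenating each row,
then row-concatenating the rows. -/
def subCR {X : Type} (g : X → Arr σ) (α : Arr X) : Option (Arr σ) :=
  catListO rowCat (List.ofFn fun i : Fin α.rows =>
    catListO colCat (List.ofFn fun j : Fin α.cols => some (g (α.entry i j))))

/-- `g_{⊖,⦶}`: substitute and assemble, first row-concatenating each column,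
then column-concatenating the columns. -/
def subRC {X : Type} (g : X → Arr σ) (α : Arr X) : Option (Arr σ) :=
  catListO colCat (List.ofFn fun j : Fin α.cols =>
    catListO rowCat (List.ofFn fun i : Fin α.rows => some (g (α.entry i j))))

/-- A substitution is uniform if all images have the same dimensions. -/
def Uniform {X : Type} (g : X → Arr σ) : Prop :=
  ∃ m n : ℕ, ∀ x : X, (g x).rows = m ∧ (g x).cols = n

end Arr

open Arr

/-- The five modes of array pattern languages. -/
inductive Mode | h | p | r | c | rc
deriving DecidableEq

/-- The array pattern language of an array pattern (an array over the
variables `ℕ`) in each mode. -/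
def langOf (σ : Type) : Mode → Arr ℕ → Set (Arr σ)
  | Mode.h, α => {W | ∃ g : Arr ℕ → Arr σ, IsMorphism g ∧ g α = W}
  | Mode.p, α => {W | ∃ s : ℕ → Arr σ, subCR s α = some W ∧ subRC s α = some W}
  | Mode.r, α => {W | ∃ s : ℕ → Arr σ, subCR s α = some W}
  | Mode.c, α => {W | ∃ s : ℕ → Arr σ, subRC s α = some W}
  | Mode.rc, α =>
      {W | ∃ s : ℕ → Arr σ, subCR s α = some W} ∪ {W | ∃ s : ℕ → Arr σ, subRC s α = some W}

/-- The entrywise extension of a letter-to-letter map to arrays. -/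
def mapArr {σ Γ : Type} (π : σ → Γ) (W : Arr σ) : Arr Γ :=
  ⟨W.rows, W.cols, W.rows_pos, W.cols_pos, fun i j => π (W.entry i j)⟩

section Aux

variable {σ γ : Type}

theorem arrExt {A B : Arr σ} (hr : A.rows = B.rows) (hc : A.cols = B.cols)
    (he : ∀ (i j : ℕ) (hi : i < A.rows) (hj : j < A.cols) (hi' : i < B.rows) (hj' : j < B.cols),
      A.entry ⟨i, hi⟩ ⟨j, hj⟩ = B.entry ⟨i, hi'⟩ ⟨j, hj'⟩) : A = B := by
  cases A with
  | mk r c hrp hcp e =>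
    cases B with
    | mk r' c' hrp' hcp' e' =>
      simp only at hr hc
      subst hr; subst hc
      simp only [Arr.mk.injEq, heq_eq_eq, true_and]
      funext i j
      exact he i j i.isLt j.isLt i.isLt j.isLt

theorem mapArr_colCat (f : σ → γ) (U V : Arr σ) :
    Option.map (mapArr f) (colCat U V) = colCat (mapArr f U) (mapArr f V) := by
  unfold colCat mapArr
  by_cases h : U.rows = V.rows
  · simp only [h, dif_pos, Option.map_some]
    congr 1
    apply arrExt
    · rfl
    · rfl
    · intro i j hi hj hi' hj'
      simp only
      split <;> rfl
  · simp [h]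

theorem mapArr_rowCat (f : σ → γ) (U V : Arr σ) :
    Option.map (mapArr f) (rowCat U V) = rowCat (mapArr f U) (mapArr f V) := by
  unfold rowCat mapArr
  by_cases h : U.cols = V.cols
  · simp only [h, dif_pos, Option.map_some]
    congr 1
    apply arrExt
    · rfl
    · rfl
    · intro i j hi hj hi' hj'
      simp only
      split <;> rfl
  · simp [h]

theorem isMorphism_mapArr (f : σ → γ) : IsMorphism (mapArr f) :=
  ⟨mapArr_colCat f, mapArr_rowCat f⟩

theorem catListO_map (f : σ → γ) (op : Arr σ → Arr σ → Option (Arr σ)) (op' : Arr γ → Arr γ → Option (Arr γ))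
    (hop : ∀ U V : Arr σ, Option.map (mapArr f) (op U V) = op' (mapArr f U) (mapArr f V)) :
    ∀ l : List (Option (Arr σ)),
      Option.map (mapArr f) (catListO op l) = catListO op' (l.map (Option.map (mapArr f)))
  | [] => rfl
  | [a] => rfl
  | a :: b :: rest => by
    have IH := catListO_map f op op' hop (b :: rest)
    show Option.map (mapArr f) (a.bind fun x => (catListO op (b :: rest)).bind fun y => op x y)
      = (Option.map (mapArr f) a).bind fun x =>
          (catListO op' ((b :: rest).map (Option.map (mapArr f)))).bind fun y => op' x y
    rw [← IH]
    cases a with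
    | none => rfl
    | some x =>
      cases h : catListO op (b :: rest) with
      | none => rfl
      | some y => simp [hop]

end Aux

theorem catListO_cons_cons {σ : Type} (op : Arr σ → Arr σ → Option (Arr σ))
    (a b : Option (Arr σ)) (rest : List (Option (Arr σ))) :
    catListO op (a :: b :: rest)
      = a.bind fun x => (catListO op (b :: rest)).bind fun y => op x y := rfl

section Aux2

variable {σ γ : Type}

theorem subCR_map {X : Type} (f : σ → γ) (s : X → Arr σ) (α : Arr X) :
    subCR (fun x => mapArr f (s x)) α = Option.map (mapArr f) (subCR s α) := by
  unfold subCR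
  rw [catListO_map f rowCat rowCat (mapArr_rowCat f), List.map_ofFn]
  refine congrArg (catListO rowCat) (congrArg List.ofFn ?_)
  funext i
  rw [Function.comp_apply, catListO_map f colCat colCat (mapArr_colCat f), List.map_ofFn]
  rfl

theorem subRC_map {X : Type} (f : σ → γ) (s : X → Arr σ) (α : Arr X) :
    subRC (fun x => mapArr f (s x)) α = Option.map (mapArr f) (subRC s α) := by
  unfold subRC
  rw [catListO_map f colCat colCat (mapArr_colCat f), List.map_ofFn]
  refine congrArg (catListO colCat) (congrArg List.ofFn ?_)
  funext j
  rw [Function.comp_apply, catListO_map f rowCat rowCat (mapArr_rowCat f), List.map_ofFn]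
  rfl

/-- The constant `m × n` array with all entries `a`. -/
def constArr (m n : ℕ) (hm : 0 < m) (hn : 0 < n) (a : σ) : Arr σ :=
  ⟨m, n, hm, hn, fun _ _ => a⟩

theorem colCat_const (m n n' : ℕ) (hm : 0 < m) (hn : 0 < n) (hn' : 0 < n') (a : σ) :
    colCat (constArr m n hm hn a) (constArr m n' hm hn' a)
      = some (constArr m (n + n') hm (by omega) a) := by
  unfold colCat constArr
  rw [dif_pos rfl]
  congr 1
  apply arrExt
  · rfl
  · rfl
  · intros; simp only; split <;> rfl

theorem rowCat_const (m m' n : ℕ) (hm : 0 < m) (hm' : 0 < m') (hn : 0 < n) (a : σ) :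
    rowCat (constArr m n hm hn a) (constArr m' n hm' hn a)
      = some (constArr (m + m') n (by omega) hn a) := by
  unfold rowCat constArr
  rw [dif_pos rfl]
  congr 1
  apply arrExt
  · rfl
  · rfl
  · intros; simp only; split <;> rfl

theorem catListO_col_const (m : ℕ) (hm : 0 < m) (a : σ) :
    ∀ k : ℕ, catListO colCat (List.replicate (k + 1) (some (constArr m 1 hm one_pos a)))
      = some (constArr m (k + 1) hm (Nat.succ_pos k) a)
  | 0 => rfl
  | k + 1 => by
    rw [List.replicate_succ, List.replicate_succ (n := k), catListO_cons_cons,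
      ← List.replicate_succ, catListO_col_const m hm a k]
    simp only [Option.bind_some]
    rw [colCat_const]
    congr 1
    apply arrExt
    · rfl
    · show 1 + (k + 1) = k + 1 + 1; omega
    · intros; rfl

theorem catListO_row_const (n : ℕ) (hn : 0 < n) (a : σ) :
    ∀ k : ℕ, catListO rowCat (List.replicate (k + 1) (some (constArr 1 n one_pos hn a)))
      = some (constArr (k + 1) n (Nat.succ_pos k) hn a)
  | 0 => rfl
  | k + 1 => by
    rw [List.replicate_succ, List.replicate_succ (n := k), catListO_cons_cons,
      ← List.replicate_succ, catListO_row_const n hn a k]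
    simp only [Option.bind_some]
    rw [rowCat_const]
    congr 1
    apply arrExt
    · show 1 + (k + 1) = k + 1 + 1; omega
    · rfl
    · intros; rfl

theorem catListO_col_const' (m k : ℕ) (hm : 0 < m) (hk : 0 < k) (a : σ) :
    catListO colCat (List.replicate k (some (constArr m 1 hm one_pos a)))
      = some (constArr m k hm hk a) := by
  obtain ⟨k', rfl⟩ : ∃ k', k = k' + 1 := ⟨k - 1, by omega⟩
  exact catListO_col_const m hm a k'

theorem catListO_row_const' (n k : ℕ) (hn : 0 < n) (hk : 0 < k) (a : σ) :
    catListO rowCat (List.replicate k (some (constArr 1 n one_pos hn a)))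
      = some (constArr k n hk hn a) := by
  obtain ⟨k', rfl⟩ : ∃ k', k = k' + 1 := ⟨k - 1, by omega⟩
  exact catListO_row_const n hn a k'

theorem subCR_const (a : σ) (β : Arr ℕ) :
    subCR (fun _ => constArr 1 1 one_pos one_pos a) β
      = some (constArr β.rows β.cols β.rows_pos β.cols_pos a) := by
  obtain ⟨n, hn⟩ : ∃ n, β.cols = n + 1 := ⟨β.cols - 1, by have := β.cols_pos; omega⟩
  obtain ⟨m, hm⟩ : ∃ m, β.rows = m + 1 := ⟨β.rows - 1, by have := β.rows_pos; omega⟩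
  unfold subCR
  have hinner : ∀ i : Fin β.rows,
      catListO colCat (List.ofFn fun j : Fin β.cols =>
        some (constArr 1 1 one_pos one_pos a)) = some (constArr 1 β.cols one_pos β.cols_pos a) := by
    intro i
    rw [List.ofFn_const]
    exact catListO_col_const' 1 β.cols one_pos β.cols_pos a
  calc catListO rowCat (List.ofFn fun i : Fin β.rows =>
        catListO colCat (List.ofFn fun j : Fin β.cols =>
          some ((fun _ : ℕ => constArr 1 1 one_pos one_pos a) (β.entry i j))))
      = catListO rowCat (List.ofFn fun _ : Fin β.rows =>
          some (constArr 1 β.cols one_pos β.cols_pos a)) := by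
        refine congrArg (catListO rowCat) (congrArg List.ofFn ?_)
        funext i; exact hinner i
    _ = some (constArr β.rows β.cols β.rows_pos β.cols_pos a) := by
        rw [List.ofFn_const]
        exact catListO_row_const' β.cols β.rows β.cols_pos β.rows_pos a

theorem subRC_const (a : σ) (β : Arr ℕ) :
    subRC (fun _ => constArr 1 1 one_pos one_pos a) β
      = some (constArr β.rows β.cols β.rows_pos β.cols_pos a) := by
  obtain ⟨n, hn⟩ : ∃ n, β.cols = n + 1 := ⟨β.cols - 1, by have := β.cols_pos; omega⟩
  obtain ⟨m, hm⟩ : ∃ m, β.rows = m + 1 := ⟨β.rows - 1, by have := β.rows_pos; omega⟩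
  unfold subRC
  calc catListO colCat (List.ofFn fun j : Fin β.cols =>
        catListO rowCat (List.ofFn fun i : Fin β.rows =>
          some ((fun _ : ℕ => constArr 1 1 one_pos one_pos a) (β.entry i j))))
      = catListO colCat (List.ofFn fun _ : Fin β.cols =>
          some (constArr β.rows 1 β.rows_pos one_pos a)) := by
        refine congrArg (catListO colCat) (congrArg List.ofFn ?_)
        funext j
        rw [List.ofFn_const]
        exact catListO_row_const' 1 β.rows one_pos β.rows_pos a
    _ = some (constArr β.rows β.cols β.rows_pos β.cols_pos a) := by
        rw [List.ofFn_const]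
        exact catListO_col_const' β.rows β.cols β.rows_pos β.cols_pos a

theorem isMorphism_comp_mapArr (f : σ → γ) {g : Arr ℕ → Arr σ} (hg : IsMorphism g) :
    IsMorphism (fun V => mapArr f (g V)) := by
  constructor
  · intro V W
    calc Option.map (fun V => mapArr f (g V)) (colCat V W)
        = Option.map (mapArr f) (Option.map g (colCat V W)) :=
          (Option.map_map (mapArr f) g _).symm
      _ = Option.map (mapArr f) (colCat (g V) (g W)) := by rw [hg.1]
      _ = colCat (mapArr f (g V)) (mapArr f (g W)) := mapArr_colCat f _ _
  · intro V W
    calc Option.map (fun V => mapArr f (g V)) (rowCat V W)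
        = Option.map (mapArr f) (Option.map g (rowCat V W)) :=
          (Option.map_map (mapArr f) g _).symm
      _ = Option.map (mapArr f) (rowCat (g V) (g W)) := by rw [hg.2]
      _ = rowCat (mapArr f (g V)) (mapArr f (g W)) := mapArr_rowCat f _ _

theorem mapMem (z : Mode) (α : Arr ℕ) (f : σ → σ) {W : Arr σ}
    (hW : W ∈ langOf σ z α) : mapArr f W ∈ langOf σ z α := by
  cases z with
  | h =>
    obtain ⟨g, hg, rfl⟩ := hW
    exact ⟨fun V => mapArr f (g V), isMorphism_comp_mapArr f hg, rfl⟩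
  | p =>
    obtain ⟨s, hs1, hs2⟩ := hW
    exact ⟨fun x => mapArr f (s x), by rw [subCR_map, hs1]; rfl, by rw [subRC_map, hs2]; rfl⟩
  | r =>
    obtain ⟨s, hs⟩ := hW
    exact ⟨fun x => mapArr f (s x), by rw [subCR_map, hs]; rfl⟩
  | c =>
    obtain ⟨s, hs⟩ := hW
    exact ⟨fun x => mapArr f (s x), by rw [subRC_map, hs]; rfl⟩
  | rc =>
    cases hW with
    | inl hW =>
      obtain ⟨s, hs⟩ := hW
      exact Or.inl ⟨fun x => mapArr f (s x), by rw [subCR_map, hs]; rfl⟩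
    | inr hW =>
      obtain ⟨s, hs⟩ := hW
      exact Or.inr ⟨fun x => mapArr f (s x), by rw [subRC_map, hs]; rfl⟩

/-- The top-left entry of an array. -/
def firstEntry (A : Arr σ) : σ := A.entry ⟨0, A.rows_pos⟩ ⟨0, A.cols_pos⟩

theorem constArr_mem (z : Mode) (a : σ) (β : Arr ℕ) :
    constArr β.rows β.cols β.rows_pos β.cols_pos a ∈ langOf σ z β := by
  cases z with
  | h =>
    refine ⟨mapArr (fun _ => a), isMorphism_mapArr _, ?_⟩
    apply arrExt
    · rfl
    · rfl
    · intros; rfl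
  | p => exact ⟨fun _ => constArr 1 1 one_pos one_pos a, subCR_const a β, subRC_const a β⟩
  | r => exact ⟨fun _ => constArr 1 1 one_pos one_pos a, subCR_const a β⟩
  | c => exact ⟨fun _ => constArr 1 1 one_pos one_pos a, subRC_const a β⟩
  | rc => exact Or.inl ⟨fun _ => constArr 1 1 one_pos one_pos a, subCR_const a β⟩

end Aux2

/-- for every mode `z`, the class `𝓛_{Σ,z}` is closed under the
letterwise extension of `π : Σ → Σ` iff `π` is a bijection. -/
theorem stmt12 {σ : Type} [Fintype σ] [Nonempty σ] (z : Mode) (π : σ → σ) :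
    (∀ α : Arr ℕ, ∃ β : Arr ℕ, mapArr π '' langOf σ z α = langOf σ z β) ↔
      Function.Bijective π := by
  constructor
  · intro hcl
    rw [← Finite.surjective_iff_bijective]
    intro a
    obtain ⟨β, hβ⟩ := hcl ⟨1, 1, one_pos, one_pos, fun _ _ => 0⟩
    have hmem : constArr β.rows β.cols β.rows_pos β.cols_pos a ∈ langOf σ z β :=
      constArr_mem z a β
    rw [← hβ] at hmem
    obtain ⟨W, -, hW⟩ := hmem
    exact ⟨firstEntry W, congrArg firstEntry hW⟩
  · intro hbij α
    refine ⟨α, Set.Subset.antisymm ?_ ?_⟩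
    · rintro _ ⟨W, hW, rfl⟩
      exact mapMem z α π hW
    · intro W hW
      let e := Equiv.ofBijective π hbij
      refine ⟨mapArr e.symm W, mapMem z α e.symm hW, ?_⟩
      apply arrExt
      · rfl
      · rfl
      · intro i j hi hj hi' hj'
        exact e.apply_symm_apply _
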